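/- The second moment of the q-Bernoulli distribution: ∑_{κ=0}^{n} [κ]_q^2 [n choose κ]_q p^κ ∏_{i=0}^{n-κ-1}(1 - p q^i) = [n]_q p + q p^2 [n]_q [n-1]_q. -/

import Mathlib

/-- The `q`-analog `[n]_q = 1 + q + ⋯ + q^(n-1)` of a natural number. -/
def qNum {R : Type*} [CommRing R] (q : R) (n : ℕ) : R := ∑ i ∈ Finset.range n, q ^ i

/-- The `q`-factorial `[n]! = [1][2]⋯[n]`. -/
def qFact {R : Type*} [CommRing R] (q : R) (n : ℕ) : R := ∏ i ∈ Finset.range n, qNum q (i + 1)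

/-- The Gaussian (`q`-)binomial coefficient, via the `q`-Pascal recursion. -/
def qBinom {R : Type*} [CommRing R] (q : R) : ℕ → ℕ → R
  | _, 0 => 1
  | 0, _ + 1 => 0
  | n + 1, k + 1 => qBinom q n k + q ^ (k + 1) * qBinom q n (k + 1)

/-- The `q`-shifted product `(1 −· p)^m = ∏_{i=0}^{m-1} (1 - p q^i)`. -/
def qProdSub {R : Type*} [CommRing R] (q p : R) (m : ℕ) : R :=
  ∏ i ∈ Finset.range m, (1 - p * q ^ i)

/-- The `q`-shifted power `(x +· y)^m = ∏_{i=0}^{m-1} (x + q^i y)`. -/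
def qProdAdd {R : Type*} [CommRing R] (q x y : R) (m : ℕ) : R :=
  ∏ i ∈ Finset.range m, (x + q ^ i * y)

/-! Let `E_n^p[w]` be the expectation of `w κ` under the weights `[n choose κ]_q p^κ (1 −· p)^(n-κ)`.
Conditioning on the first trial (the `q`-Pascal rule together with
`(1 −· p)^(m+1) = (1 - p) (1 −· p q)^m`) gives
`E_{n+1}^p[w] = p E_n^p[w (· + 1)] + (1 - p) E_n^{p q}[w]`: a success shifts the count, a failure
leaves `n` trials with parameter `p q`. Since `[κ + 1] = 1 + q [κ]`, induction on `n` yields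
`E[1] = 1`, then `E[[κ]] = [n] p`, then the second moment, the last step closing by
`[n]^2 = [n] + q [n] [n-1]`. -/

section

variable {R : Type*} [CommRing R]

lemma qNum_succ (q : R) (n : ℕ) : qNum q (n + 1) = 1 + q * qNum q n := by
  simp [qNum, Finset.sum_range_succ', pow_succ, Finset.mul_sum, add_comm, mul_comm]

lemma qNum_sq (q : R) (n : ℕ) : qNum q n ^ 2 = qNum q n + q * qNum q n * qNum q (n - 1) := by
  cases n with
  | zero => simp [qNum]
  | succ m => rw [Nat.add_sub_cancel, qNum_succ]; ring

lemma qBinom_zero_right (q : R) (n : ℕ) : qBinom q n 0 = 1 := by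
  cases n <;> rfl

lemma qBinom_eq_zero_of_lt (q : R) {n k : ℕ} (h : n < k) : qBinom q n k = 0 := by
  induction n generalizing k with
  | zero => obtain ⟨k, rfl⟩ := Nat.exists_eq_succ_of_ne_zero (by omega : k ≠ 0); rfl
  | succ n ih =>
    obtain ⟨k, rfl⟩ := Nat.exists_eq_succ_of_ne_zero (by omega : k ≠ 0)
    show qBinom q n k + q ^ (k + 1) * qBinom q n (k + 1) = 0
    rw [ih (by omega), ih (by omega), mul_zero, add_zero]

lemma qProdSub_succ (q p : R) (m : ℕ) :
    qProdSub q p (m + 1) = (1 - p) * qProdSub q (p * q) m := by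
  simp only [qProdSub, Finset.prod_range_succ', pow_zero, mul_one, pow_succ', mul_assoc,
    mul_comm _ (1 - p)]

def qBernoulliExpectation (q p : R) (n : ℕ) (w : ℕ → R) : R :=
  ∑ κ ∈ Finset.range (n + 1), w κ * qBinom q n κ * p ^ κ * qProdSub q p (n - κ)

lemma qBernoulliExpectation_add (q p : R) (n : ℕ) (w v : ℕ → R) :
    qBernoulliExpectation q p n (fun κ => w κ + v κ) =
      qBernoulliExpectation q p n w + qBernoulliExpectation q p n v := by
  simp only [qBernoulliExpectation, add_mul, Finset.sum_add_distrib]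

lemma qBernoulliExpectation_const_mul (q p c : R) (n : ℕ) (w : ℕ → R) :
    qBernoulliExpectation q p n (fun κ => c * w κ) = c * qBernoulliExpectation q p n w := by
  simp only [qBernoulliExpectation, Finset.mul_sum, mul_assoc]

lemma qBernoulliExpectation_succ (q p : R) (n : ℕ) (w : ℕ → R) :
    qBernoulliExpectation q p (n + 1) w =
      p * qBernoulliExpectation q p n (fun κ => w (κ + 1)) +
        (1 - p) * qBernoulliExpectation q (p * q) n w := by
  have success_or_failure : ∀ k : ℕ,
      w (k + 1) * qBinom q (n + 1) (k + 1) * p ^ (k + 1) * qProdSub q p (n + 1 - (k + 1)) =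
        p * (w (k + 1) * qBinom q n k * p ^ k * qProdSub q p (n - k)) +
          w (k + 1) * q ^ (k + 1) * qBinom q n (k + 1) * p ^ (k + 1) * qProdSub q p (n - k) := by
    intro k
    rw [Nat.add_sub_add_right]
    simp only [qBinom]
    ring
  have failure : ∀ k ∈ Finset.range n,
      w (k + 1) * q ^ (k + 1) * qBinom q n (k + 1) * p ^ (k + 1) * qProdSub q p (n - k) =
        (1 - p) * (w (k + 1) * qBinom q n (k + 1) * (p * q) ^ (k + 1) *
          qProdSub q (p * q) (n - (k + 1))) := by
    intro k hk
    rw [show n - k = n - (k + 1) + 1 by simp at hk; omega, qProdSub_succ]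
    ring
  unfold qBernoulliExpectation
  rw [Finset.sum_range_succ', Finset.sum_congr rfl fun k _ => success_or_failure k,
    Finset.sum_add_distrib, ← Finset.mul_sum, Finset.sum_range_succ (fun k =>
      w (k + 1) * q ^ (k + 1) * qBinom q n (k + 1) * p ^ (k + 1) * qProdSub q p (n - k)),
    qBinom_eq_zero_of_lt q (Nat.lt_succ_self n), Finset.sum_congr rfl failure,
    ← Finset.mul_sum, Finset.sum_range_succ' (fun κ =>
      w κ * qBinom q n κ * (p * q) ^ κ * qProdSub q (p * q) (n - κ))]
  simp only [qBinom_zero_right, pow_zero, Nat.sub_zero, qProdSub_succ]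
  ring

lemma qBernoulliExpectation_one (q p : R) (n : ℕ) :
    qBernoulliExpectation q p n (fun _ => 1) = 1 := by
  induction n generalizing p with
  | zero => simp [qBernoulliExpectation, qBinom_zero_right, qProdSub]
  | succ n ih => rw [qBernoulliExpectation_succ, ih, ih]; ring

lemma qBernoulliExpectation_qNum (q p : R) (n : ℕ) :
    qBernoulliExpectation q p n (qNum q) = qNum q n * p := by
  induction n generalizing p with
  | zero => simp [qBernoulliExpectation, qNum]
  | succ n ih =>
    simp only [qBernoulliExpectation_succ, qNum_succ, qBernoulliExpectation_add,
      qBernoulliExpectation_const_mul, qBernoulliExpectation_one, ih]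
    ring

lemma qBernoulliExpectation_qNum_sq (q p : R) (n : ℕ) :
    qBernoulliExpectation q p n (fun κ => qNum q κ ^ 2) =
      qNum q n * p + q * p ^ 2 * qNum q n * qNum q (n - 1) := by
  induction n generalizing p with
  | zero => simp [qBernoulliExpectation, qNum]
  | succ n ih =>
    have square : (fun κ => qNum q (κ + 1) ^ 2) =
        fun κ => 1 + (2 * q * qNum q κ + q ^ 2 * qNum q κ ^ 2) := by
      funext κ; rw [qNum_succ]; ring
    rw [qBernoulliExpectation_succ, square]
    simp only [qBernoulliExpectation_add, qBernoulliExpectation_const_mul,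
      qBernoulliExpectation_one, qBernoulliExpectation_qNum, ih, Nat.add_sub_cancel, qNum_succ]
    linear_combination (-(q ^ 2 * p ^ 2)) * qNum_sq q n

end

theorem qBernoulli_second_moment_general {F : Type*} [Field F] (q p : F)
    (n : ℕ) :
    ∑ κ ∈ Finset.range (n + 1), (qNum q κ) ^ 2 * qBinom q n κ * p ^ κ * qProdSub q p (n - κ) =
      qNum q n * p + q * p ^ 2 * qNum q n * qNum q (n - 1) :=
  qBernoulliExpectation_qNum_sq q p n

/-- Second moment of the q-Bernoulli distribution (2.18):
`∑ [κ]^2 [n choose κ] p^κ (1 −· p)^{n-κ} = [n] p + q p^2 [n] [n-1]`. -/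
theorem qBernoulli_second_moment {F : Type*} [Field F] (q p : F) (hq : q ≠ 1)
    (n : ℕ) (hn : 1 ≤ n) :
    ∑ κ ∈ Finset.range (n + 1), (qNum q κ) ^ 2 * qBinom q n κ * p ^ κ * qProdSub q p (n - κ) =
      qNum q n * p + q * p ^ 2 * qNum q n * qNum q (n - 1) :=
  qBernoulli_second_moment_general q p n
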